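/- Let G be a group, g ≥ 2, and {T_k}_{k ∈ ℤ/(8g−4)ℤ} elements of G satisfying the relation T_k⁻¹ T_{σ(k)+1}⁻¹ = T_{k−1}⁻¹ T_{σ(k)+4g−2}⁻¹ for all k (indices mod 8g−4). Then for all m ≥ 1 and all k: T_k⁻¹ (T_{σ(k)+1}⁻¹ T_{k+4g−1}⁻¹)^m = (T_{k−1}⁻¹ T_{σ(k)+4g−3}⁻¹)^m T_k⁻¹. -/
import Mathlib

def sigmaZ (g : ℕ) (k : ZMod (8 * g - 4)) : ZMod (8 * g - 4) :=
  if Odd k.val then 4 * (g : ZMod (8 * g - 4)) - k else 2 - k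

section Aux
variable (g : ℕ)

lemma h2dvd : 2 ∣ 8 * g - 4 := ⟨4 * g - 2, by omega⟩

noncomputable def phi : ZMod (8 * g - 4) →+* ZMod 2 := ZMod.castHom (h2dvd g) (ZMod 2)

lemma podd (hg : 2 ≤ g) (x : ZMod (8 * g - 4)) : Odd x.val ↔ phi g x = 1 := by
  have : NeZero (8 * g - 4) := ⟨by omega⟩
  rw [phi, ZMod.castHom_apply, ← ZMod.natCast_val, ← ZMod.natCast_mod, Nat.odd_iff]
  constructor
  · intro h; rw [h]; rfl
  · intro h
    by_contra hc
    have h0 : x.val % 2 = 0 := by omega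
    rw [h0] at h
    exact absurd h (by decide)

lemma h8 (hg : 2 ≤ g) : 8 * (g : ZMod (8 * g - 4)) = 4 := by
  have : ((8 * g - 4 : ℕ) : ZMod (8 * g - 4)) = 0 := ZMod.natCast_self _
  rw [Nat.cast_sub (by omega)] at this
  push_cast at this
  linear_combination this

lemma phi_sigma (hg : 2 ≤ g) (k : ZMod (8 * g - 4)) :
    phi g (sigmaZ g k + 4 * (g : ZMod (8 * g - 4)) - 2) = phi g k := by
  have hneg : ∀ a : ZMod 2, -a = a := by decide
  unfold sigmaZ
  have h4 : ∀ a : ZMod 2, a * 4 = 0 := by decide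
  have h8' : ∀ a : ZMod 2, a * 8 = 0 := by decide
  split <;> simp only [map_sub, map_add, map_mul, map_natCast, map_ofNat] <;>
    ring_nf <;> simp [h4, h8', hneg, show ((2:ZMod 2) = 0) from rfl]

lemma sigma2 (hg : 2 ≤ g) (k : ZMod (8 * g - 4)) :
    sigmaZ g (sigmaZ g k + 4 * (g : ZMod (8 * g - 4)) - 2)
      = k + 4 * (g : ZMod (8 * g - 4)) - 2 := by
  have hpar : Odd (sigmaZ g k + 4 * (g : ZMod (8 * g - 4)) - 2).val ↔ Odd k.val := by
    rw [podd g hg, podd g hg, phi_sigma g hg]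
  conv_lhs => rw [sigmaZ]
  rw [if_congr hpar rfl rfl]
  unfold sigmaZ
  have h8 := h8 g hg
  split <;> [skip; skip] <;> linear_combination -h8

end Aux

theorem generator_relation_iterated {G : Type*} [Group G] (g : ℕ) (hg : 2 ≤ g)
    (T : ZMod (8 * g - 4) → G)
    (hrel : ∀ k, (T k)⁻¹ * (T (sigmaZ g k + 1))⁻¹
      = (T (k - 1))⁻¹ * (T (sigmaZ g k + 4 * (g : ZMod (8 * g - 4)) - 2))⁻¹) :
    ∀ m : ℕ, 1 ≤ m → ∀ k,
      (T k)⁻¹ * ((T (sigmaZ g k + 1))⁻¹ * (T (k + 4 * (g : ZMod (8 * g - 4)) - 1))⁻¹) ^ m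
      = ((T (k - 1))⁻¹ * (T (sigmaZ g k + 4 * (g : ZMod (8 * g - 4)) - 3))⁻¹) ^ m * (T k)⁻¹ := by
  intro m hm k
  set gc : ZMod (8 * g - 4) := (g : ZMod (8 * g - 4)) with hgc
  have base : SemiconjBy (T k)⁻¹
      ((T (sigmaZ g k + 1))⁻¹ * (T (k + 4 * gc - 1))⁻¹)
      ((T (k - 1))⁻¹ * (T (sigmaZ g k + 4 * gc - 3))⁻¹) := by
    have h1 := hrel k
    have h2 := hrel (sigmaZ g k + 4 * gc - 2)
    rw [sigma2 g hg k] at h2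
    have e1 : k + 4 * gc - 2 + 1 = k + 4 * gc - 1 := by ring
    have e2 : sigmaZ g k + 4 * gc - 2 - 1 = sigmaZ g k + 4 * gc - 3 := by ring
    have e3 : k + 4 * gc - 2 + 4 * gc - 2 = k := by linear_combination h8 g hg
    rw [e1, e2, e3] at h2
    show (T k)⁻¹ * ((T (sigmaZ g k + 1))⁻¹ * (T (k + 4 * gc - 1))⁻¹)
        = ((T (k - 1))⁻¹ * (T (sigmaZ g k + 4 * gc - 3))⁻¹) * (T k)⁻¹
    calc (T k)⁻¹ * ((T (sigmaZ g k + 1))⁻¹ * (T (k + 4 * gc - 1))⁻¹)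
        = ((T k)⁻¹ * (T (sigmaZ g k + 1))⁻¹) * (T (k + 4 * gc - 1))⁻¹ := by group
      _ = (T (k - 1))⁻¹ * ((T (sigmaZ g k + 4 * gc - 2))⁻¹ * (T (k + 4 * gc - 1))⁻¹) := by
          rw [h1]; group
      _ = (T (k - 1))⁻¹ * ((T (sigmaZ g k + 4 * gc - 3))⁻¹ * (T k)⁻¹) := by rw [h2]
      _ = ((T (k - 1))⁻¹ * (T (sigmaZ g k + 4 * gc - 3))⁻¹) * (T k)⁻¹ := by group
  exact base.pow_right m
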